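/- arXiv:2001.10707 — 2 statements merged into one kernel-verified Lean document; each statement's English description precedes it below -/
import Mathlib

section
/- Suppose every coupling J_B (B ∈ 𝔅) is independently Gaussian with mean J_{0,B} ∈ ℝ and variance Λ_B² > 0, and fix A ∈ 𝔅. Then the third-moment quenched average satisfies E[ −(J_A − J_{0,A})³ ⟨σ_A⟩_J ]_{{J_{0,B}, Λ_B²}} ≥ E[ −J³ tanh(β J) ]_{{0, Λ_A²}}, where the right-hand side is the expectation of −x³ tanh(β x) under a centered Gaussian with variance Λ_A². -/
open MeasureTheory Real Finset ProbabilityTheory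

/-- The spin value of a Boolean: `true ↦ 1`, `false ↦ -1`. -/
noncomputable def spinVal (b : Bool) : ℝ := if b then 1 else -1

/-- `σ_B = ∏ i ∈ B, σ_i`. -/
noncomputable def sigmaSet {V : Type} (σ : V → Bool) (B : Finset V) : ℝ :=
  ∏ i ∈ B, spinVal (σ i)

/-- The Gibbs (thermal) average `⟨σ_A⟩_J` at inverse temperature `β` for the Hamiltonian
`H(σ) = -∑_{B ∈ ℬ} J_B σ_B`. -/
noncomputable def gibbsAvg {V : Type} [Fintype V] [DecidableEq V] (β : ℝ)
    (ℬ : Finset (Finset V)) (J : ℬ → ℝ) (A : Finset V) : ℝ :=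
  (∑ σ : V → Bool, sigmaSet σ A * Real.exp (β * ∑ B : ℬ, J B * sigmaSet σ (B : Finset V))) /
  (∑ σ : V → Bool, Real.exp (β * ∑ B : ℬ, J B * sigmaSet σ (B : Finset V)))

/-- The product measure of independent Gaussian couplings `J_B ~ N(J_{0,B}, Λ_B²)`. -/
noncomputable def gaussQuenched {V : Type} (ℬ : Finset (Finset V))
    (J0 : Finset V → ℝ) (Λ : Finset V → NNReal) : Measure (ℬ → ℝ) :=
  Measure.pi fun B => gaussianReal (J0 (B : Finset V)) (Λ (B : Finset V) ^ 2)

/-!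
Reflecting `J_A` about its mean, `J ↦ T J` with `(T J)_A = 2 J_{0,A} - J_A`, preserves the
quenched measure, so the left-hand side is the average of `f(J)` and `f(T J)`, where
`f(J) = -(J_A - J_{0,A})³ ⟨σ_A⟩_J`. Since `σ_A = ±1`, the coupling `J_A` enters the Gibbs average
only through `⟨σ_A⟩_J = tanh (β J_A + h)`, where the cavity field `h = artanh ⟨σ_A⟩` at
`J_A = 0` does not depend on `J_A`.
Writing `x = J_A - J_{0,A}`, the two averages are `tanh (y ± β x)` for a common `y`, and
`tanh (y + t) - tanh (y - t) = sinh 2t / (sinh² y + cosh² t) ≤ 2 tanh t` for `t ≥ 0` gives the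
pointwise bound `-x³ tanh (β x) ≤ (f(J) + f(T J)) / 2`. Integrating, with `x ~ N(0, Λ_A²)`,
proves the claim.
-/

open Function
open scoped NNReal

namespace Real

@[fun_prop]
theorem continuous_tanh : Continuous tanh := by
  rw [funext tanh_eq_sinh_div_cosh]
  exact continuous_sinh.div continuous_cosh fun x => (cosh_pos x).ne'

theorem tanh_add_eq_div (x y : ℝ) :
    tanh (x + y) = (sinh x + cosh x * tanh y) / (cosh x + sinh x * tanh y) := by
  have hy : cosh y ≠ 0 := (cosh_pos y).ne'
  rw [tanh_eq_sinh_div_cosh, tanh_eq_sinh_div_cosh, sinh_add, cosh_add]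
  field_simp

theorem cosh_add_mul_cosh_sub (x y : ℝ) :
    cosh (x + y) * cosh (x - y) = sinh x ^ 2 + cosh y ^ 2 := by
  rw [cosh_add, cosh_sub]
  linear_combination cosh y ^ 2 * cosh_sq x + sinh x ^ 2 * cosh_sq y

theorem tanh_add_sub_tanh_sub_le (y : ℝ) {t : ℝ} (ht : 0 ≤ t) :
    tanh (y + t) - tanh (y - t) ≤ 2 * tanh t := by
  have hcosh := cosh_pos t
  have hdiff : tanh (y + t) - tanh (y - t) = sinh (2 * t) / (sinh y ^ 2 + cosh t ^ 2) := by
    rw [tanh_eq_sinh_div_cosh, tanh_eq_sinh_div_cosh,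
      div_sub_div _ _ (cosh_pos _).ne' (cosh_pos _).ne', ← sinh_sub, cosh_add_mul_cosh_sub]
    ring_nf
  calc tanh (y + t) - tanh (y - t) = sinh (2 * t) / (sinh y ^ 2 + cosh t ^ 2) := hdiff
    _ ≤ sinh (2 * t) / cosh t ^ 2 :=
      div_le_div_of_nonneg_left (sinh_nonneg_iff.2 (by linarith)) (by positivity)
        (le_add_of_nonneg_left (sq_nonneg _))
    _ = 2 * tanh t := by
      rw [sinh_two_mul, tanh_eq_sinh_div_cosh]
      field_simp

theorem mul_tanh_add_sub_tanh_sub_le (y x : ℝ) {β : ℝ} (hβ : 0 ≤ β) :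
    x * (tanh (y + β * x) - tanh (y - β * x)) ≤ 2 * x * tanh (β * x) := by
  rcases le_total 0 x with hx | hx
  · have := mul_le_mul_of_nonneg_left (tanh_add_sub_tanh_sub_le y (mul_nonneg hβ hx)) hx
    linarith
  · have := tanh_add_sub_tanh_sub_le y (t := -(β * x)) (by nlinarith)
    rw [tanh_neg, ← sub_eq_add_neg, sub_neg_eq_add] at this
    have := mul_le_mul_of_nonneg_left this (neg_nonneg.2 hx)
    linarith

end Real

theorem sigmaSet_eq_one_or_eq_neg_one {V : Type} (σ : V → Bool) (B : Finset V) :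
    sigmaSet σ B = 1 ∨ sigmaSet σ B = -1 := by
  refine Finset.prod_induction _ (fun x => x = 1 ∨ x = -1) ?_ (Or.inl rfl) fun i _ => ?_
  · rintro x y (rfl | rfl) (rfl | rfl) <;> norm_num
  · cases σ i <;> simp [spinVal]

theorem sigmaSet_mul_self {V : Type} (σ : V → Bool) (B : Finset V) :
    sigmaSet σ B * sigmaSet σ B = 1 := by
  rcases sigmaSet_eq_one_or_eq_neg_one σ B with h | h <;> rw [h] <;> norm_num

theorem sigmaSet_const_true {V : Type} (B : Finset V) : sigmaSet (fun _ => true) B = 1 := by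
  simp [sigmaSet, spinVal]

theorem exists_sigmaSet_eq_neg_one {V : Type} [DecidableEq V] {B : Finset V} (hB : B.Nonempty) :
    ∃ σ : V → Bool, sigmaSet σ B = -1 := by
  obtain ⟨i, hi⟩ := hB
  refine ⟨fun j => decide (j ≠ i), ?_⟩
  rw [sigmaSet, Finset.prod_eq_single i (fun j _ hj => by simp [spinVal, hj]) (absurd hi)]
  simp [spinVal]

theorem exp_mul_sigmaSet {V : Type} (x : ℝ) (σ : V → Bool) (B : Finset V) :
    exp (x * sigmaSet σ B) = cosh x + sigmaSet σ B * sinh x := by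
  rcases sigmaSet_eq_one_or_eq_neg_one σ B with h | h <;> rw [h]
  · rw [mul_one, one_mul, cosh_add_sinh]
  · rw [mul_neg_one, ← cosh_sub_sinh]
    ring

section Gibbs

variable {V : Type} [DecidableEq V] (β : ℝ) (ℬ : Finset (Finset V))

noncomputable def boltzmannWeight (J : ℬ → ℝ) (σ : V → Bool) : ℝ :=
  exp (β * ∑ B : ℬ, J B * sigmaSet σ (B : Finset V))

theorem boltzmannWeight_eq_exp_mul_update (J : ℬ → ℝ) (a : ℬ) (σ : V → Bool) :
    boltzmannWeight β ℬ J σ =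
      exp (β * J a * sigmaSet σ a) * boltzmannWeight β ℬ (update J a 0) σ := by
  have hsplit : ∀ B, J B * sigmaSet σ B =
      update J a 0 B * sigmaSet σ B + if B = a then J a * sigmaSet σ a else 0 := by
    intro B
    by_cases hB : B = a
    · subst hB; simp
    · simp [hB]
  rw [boltzmannWeight, boltzmannWeight, ← exp_add, Finset.sum_congr rfl fun B _ => hsplit B,
    Finset.sum_add_distrib, Finset.sum_ite_eq' Finset.univ a, if_pos (Finset.mem_univ a)]
  ring_nf

variable [Fintype V]

theorem gibbsAvg_eq_div_sum_boltzmannWeight (J : ℬ → ℝ) (A : Finset V) :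
    gibbsAvg β ℬ J A =
      (∑ σ, sigmaSet σ A * boltzmannWeight β ℬ J σ) / ∑ σ, boltzmannWeight β ℬ J σ :=
  rfl

theorem sum_boltzmannWeight_pos (J : ℬ → ℝ) : 0 < ∑ σ, boltzmannWeight β ℬ J σ :=
  Finset.sum_pos (fun _ _ => exp_pos _) Finset.univ_nonempty

theorem abs_gibbsAvg_lt_one (J : ℬ → ℝ) {A : Finset V} (hA : A.Nonempty) :
    |gibbsAvg β ℬ J A| < 1 := by
  have hZ := sum_boltzmannWeight_pos β ℬ J
  have hw : ∀ σ, 0 < boltzmannWeight β ℬ J σ := fun _ => exp_pos _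
  have hsign := fun σ => sigmaSet_eq_one_or_eq_neg_one σ A
  obtain ⟨σneg, hσneg⟩ := exists_sigmaSet_eq_neg_one hA
  have hplus : 0 < ∑ σ, (1 + sigmaSet σ A) * boltzmannWeight β ℬ J σ := by
    refine Finset.sum_pos' (fun σ _ => mul_nonneg ?_ (hw σ).le)
      ⟨fun _ => true, Finset.mem_univ _, ?_⟩
    · rcases hsign σ with h | h <;> rw [h] <;> norm_num
    · rw [sigmaSet_const_true]; linarith [hw fun _ => true]
  have hminus : 0 < ∑ σ, (1 - sigmaSet σ A) * boltzmannWeight β ℬ J σ := by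
    refine Finset.sum_pos' (fun σ _ => mul_nonneg ?_ (hw σ).le) ⟨σneg, Finset.mem_univ _, ?_⟩
    · rcases hsign σ with h | h <;> rw [h] <;> norm_num
    · rw [hσneg]; linarith [hw σneg]
  simp only [add_mul, sub_mul, one_mul, Finset.sum_add_distrib, Finset.sum_sub_distrib]
    at hplus hminus
  rw [gibbsAvg_eq_div_sum_boltzmannWeight, abs_div, abs_of_pos hZ, div_lt_one hZ, abs_lt]
  constructor <;> linarith

theorem gibbsAvg_eq_tanh (J : ℬ → ℝ) (a : ℬ)
    (hm : |gibbsAvg β ℬ (update J a 0) a| < 1) :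
    gibbsAvg β ℬ J a = tanh (β * J a + artanh (gibbsAvg β ℬ (update J a 0) a)) := by
  have hnum : ∑ σ, sigmaSet σ a * boltzmannWeight β ℬ J σ =
      cosh (β * J a) * ∑ σ, sigmaSet σ a * boltzmannWeight β ℬ (update J a 0) σ +
        sinh (β * J a) * ∑ σ, boltzmannWeight β ℬ (update J a 0) σ := by
    simp only [boltzmannWeight_eq_exp_mul_update β ℬ J a, exp_mul_sigmaSet, Finset.mul_sum,
      ← Finset.sum_add_distrib]
    refine Finset.sum_congr rfl fun σ _ => ?_
    linear_combination sinh (β * J a) * boltzmannWeight β ℬ (update J a 0) σ *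
      sigmaSet_mul_self σ a
  have hden : ∑ σ, boltzmannWeight β ℬ J σ =
      cosh (β * J a) * ∑ σ, boltzmannWeight β ℬ (update J a 0) σ +
        sinh (β * J a) * ∑ σ, sigmaSet σ a * boltzmannWeight β ℬ (update J a 0) σ := by
    simp only [boltzmannWeight_eq_exp_mul_update β ℬ J a, exp_mul_sigmaSet, Finset.mul_sum,
      ← Finset.sum_add_distrib]
    exact Finset.sum_congr rfl fun σ _ => by ring
  have hZ := sum_boltzmannWeight_pos β ℬ (update J a 0)
  rw [tanh_add_eq_div, tanh_artanh (by rwa [Set.mem_Ioo, ← abs_lt]),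
    gibbsAvg_eq_div_sum_boltzmannWeight, gibbsAvg_eq_div_sum_boltzmannWeight, hnum, hden]
  field_simp
  ring

theorem measurable_gibbsAvg (A : Finset V) :
    Measurable fun J : ℬ → ℝ => gibbsAvg β ℬ J A := by
  unfold gibbsAvg
  fun_prop

theorem cube_mul_sub_gibbsAvg_reflect_le (hβ : 0 ≤ β) (J : ℬ → ℝ) {a : ℬ}
    (ha : (a : Finset V).Nonempty) (c : ℝ) :
    (J a - c) ^ 3 * (gibbsAvg β ℬ J a - gibbsAvg β ℬ (update J a (2 * c - J a)) a)
      ≤ 2 * (J a - c) ^ 3 * tanh (β * (J a - c)) := by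
  set h := artanh (gibbsAvg β ℬ (update J a 0) a)
  have hm := abs_gibbsAvg_lt_one β ℬ (update J a 0) ha
  have hJ := gibbsAvg_eq_tanh β ℬ J a hm
  have hJ' := gibbsAvg_eq_tanh β ℬ (update J a (2 * c - J a)) a (by rwa [update_idem])
  rw [update_idem, update_self] at hJ'
  have key := mul_tanh_add_sub_tanh_sub_le (β * c + h) (J a - c) hβ
  rw [show β * c + h + β * (J a - c) = β * J a + h by ring,
    show β * c + h - β * (J a - c) = β * (2 * c - J a) + h by ring, ← hJ, ← hJ'] at key
  have := mul_le_mul_of_nonneg_left key (sq_nonneg (J a - c))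
  linarith

end Gibbs

theorem ProbabilityTheory.measurePreserving_two_mul_sub_gaussianReal (c : ℝ) (v : ℝ≥0) :
    MeasurePreserving (fun x => 2 * c - x) (gaussianReal c v) (gaussianReal c v) :=
  ⟨by fun_prop, by rw [gaussianReal_map_const_sub]; ring_nf⟩

theorem MeasureTheory.measurePreserving_update_pi {ι α : Type*} [Fintype ι] [DecidableEq ι]
    [MeasurableSpace α] (μ : ι → Measure α) [∀ i, SigmaFinite (μ i)] {i : ι} {f : α → α}
    (hf : MeasurePreserving f (μ i) (μ i)) :
    MeasurePreserving (fun x => update x i (f (x i))) (Measure.pi μ) (Measure.pi μ) := by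
  have hpi := measurePreserving_pi μ μ (f := update (fun _ => id) i f) fun j => by
    by_cases hj : j = i
    · subst hj; simpa using hf
    · simpa [hj] using MeasurePreserving.id (μ j)
  convert hpi using 2 with x
  ext j
  by_cases hj : j = i
  · subst hj; simp
  · simp [hj]

theorem MeasureTheory.integral_le_integral_of_le_half_add_comp {α : Type*} [MeasurableSpace α]
    {μ : Measure α} {T : α → α} (hT : MeasurePreserving T μ μ) {f g : α → ℝ}
    (hf : Integrable f μ) (hg : Integrable g μ) (hfg : ∀ᵐ x ∂μ, g x ≤ (f x + f (T x)) / 2) :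
    ∫ x, g x ∂μ ≤ ∫ x, f x ∂μ := by
  have hfT : Integrable (fun x => f (T x)) μ := hT.integrable_comp_of_integrable hf
  have hTf : ∫ x, f (T x) ∂μ = ∫ x, f x ∂μ := by
    rw [← integral_map hT.aemeasurable (by rw [hT.map_eq]; exact hf.1), hT.map_eq]
  calc ∫ x, g x ∂μ ≤ ∫ x, (f x + f (T x)) / 2 ∂μ :=
        integral_mono_ae hg ((hf.add hfT).div_const 2) hfg
    _ = ∫ x, f x ∂μ := by rw [integral_div, integral_add hf hfT, hTf]; ring

section Quenched

variable {V : Type} (ℬ : Finset (Finset V)) (J0 : Finset V → ℝ) (Λ : Finset V → ℝ≥0)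

theorem integral_gaussQuenched_comp_sub (a : ℬ) {h : ℝ → ℝ} (hh : Measurable h) :
    ∫ J, h (J a - J0 a) ∂gaussQuenched ℬ J0 Λ = ∫ x, h x ∂gaussianReal 0 (Λ a ^ 2) := by
  rw [gaussQuenched, integral_comp_eval (X := fun _ => ℝ) (i := a) (f := fun x => h (x - J0 a))
    (hh.comp (measurable_sub_const _)).aestronglyMeasurable,
    ← sub_self (J0 a), ← gaussianReal_map_sub_const,
    integral_map (by fun_prop) hh.aestronglyMeasurable]

theorem integrable_gaussQuenched_sub_pow (a : ℬ) (n : ℕ) :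
    Integrable (fun J => (J a - J0 a) ^ n) (gaussQuenched ℬ J0 Λ) := by
  have hL : MemLp (fun x => x - J0 a) n (gaussianReal (J0 a) (Λ a ^ 2)) :=
    (memLp_id_gaussianReal' n (by simp)).sub (memLp_const _)
  refine integrable_comp_eval (X := fun _ => ℝ) (μ := fun B : ℬ => gaussianReal (J0 B) (Λ B ^ 2))
    (f := fun x => (x - J0 a) ^ n) ((integrable_norm_iff (by fun_prop)).1 ?_)
  simpa [norm_pow] using hL.integrable_norm_pow'

end Quenched

theorem gaussian_third_moment_lower_bound_general
    {V : Type} [Fintype V] [DecidableEq V]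
    (ℬ : Finset (Finset V)) (hℬ : ∀ B ∈ ℬ, B.Nonempty)
    (β : ℝ) (hβ : 0 < β)
    (J0 : Finset V → ℝ) (Λ : Finset V → NNReal)
    (A : Finset V) (hA : A ∈ ℬ) :
    ∫ J, -(J ⟨A, hA⟩ - J0 A) ^ 3 * gibbsAvg β ℬ J A ∂(gaussQuenched ℬ J0 Λ)
      ≥ ∫ x, -x ^ 3 * Real.tanh (β * x) ∂(gaussianReal 0 (Λ A ^ 2)) := by
  set a : ℬ := ⟨A, hA⟩
  have hcube := (integrable_gaussQuenched_sub_pow ℬ J0 Λ a 3).neg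
  have hreflect := measurePreserving_update_pi (fun B : ℬ => gaussianReal (J0 B) (Λ B ^ 2))
    (i := a) (measurePreserving_two_mul_sub_gaussianReal (J0 A) (Λ A ^ 2))
  rw [ge_iff_le, ← integral_gaussQuenched_comp_sub ℬ J0 Λ a (h := fun x => -x ^ 3 * tanh (β * x))
    (by fun_prop)]
  refine integral_le_integral_of_le_half_add_comp hreflect
    (hcube.mul_bdd (measurable_gibbsAvg β ℬ A).aestronglyMeasurable
      (ae_of_all _ fun J => (abs_gibbsAvg_lt_one β ℬ J (hℬ A hA)).le))
    (hcube.mul_bdd (by fun_prop : Continuous _).aestronglyMeasurable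
      (ae_of_all _ fun J => (abs_tanh_lt_one _).le))
    (ae_of_all _ fun J => ?_)
  have := cube_mul_sub_gibbsAvg_reflect_le β ℬ hβ.le J (a := a) (hℬ A hA) (J0 A)
  simp only [update_self]
  linarith

/-- For independent Gaussian couplings `J_B ~ N(J_{0,B}, Λ_B²)`, the third-moment quenched
average satisfies `E[-(J_A - J_{0,A})³ ⟨σ_A⟩_J] ≥ E[-J³ tanh(βJ)]_{N(0, Λ_A²)}`. -/
theorem gaussian_third_moment_lower_bound
    {V : Type} [Fintype V] [DecidableEq V]
    (ℬ : Finset (Finset V)) (hℬ : ∀ B ∈ ℬ, B.Nonempty)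
    (β : ℝ) (hβ : 0 < β)
    (J0 : Finset V → ℝ) (Λ : Finset V → NNReal) (hΛ : ∀ B, 0 < Λ B)
    (A : Finset V) (hA : A ∈ ℬ) :
    ∫ J, -(J ⟨A, hA⟩ - J0 A) ^ 3 * gibbsAvg β ℬ J A ∂(gaussQuenched ℬ J0 Λ)
      ≥ ∫ x, -x ^ 3 * Real.tanh (β * x) ∂(gaussianReal 0 (Λ A ^ 2)) :=
  gaussian_third_moment_lower_bound_general ℬ hℬ β hβ J0 Λ A hA
end

section
/- Consider the random-field Ising model: in addition to arbitrary interactions J_B (B ∈ 𝔅, each B with |B| ≥ 2, deterministic or random with any densities), each site i ∈ V carries an independent Gaussian random field h_i ~ N(J_0, Λ²) with Λ > 0. Define the spin-glass order parameter q = (1/|V|) ∑_{i∈V} E[ ⟨σ_i⟩² ]. Then q has the finite lower bound E[ tanh²(β h) ]_{N(0, Λ²)} ≤ q, where the left-hand side is the expectation of tanh²(β x) under a centered Gaussian with variance Λ² and is independent of J_0 and of all the interactions J_B. -/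
open MeasureTheory Real Finset ProbabilityTheory

/-- The Gibbs average `⟨σ_i⟩` of the spin at site `i`, for the random-field Ising model
with Hamiltonian `H(σ) = -∑_{B ∈ ℬ} J_B σ_B - ∑_{j ∈ V} h_j σ_j`. -/
noncomputable def rfGibbs {V : Type} [Fintype V] [DecidableEq V] (β : ℝ)
    (ℬ : Finset (Finset V)) (J : ℬ → ℝ) (h : V → ℝ) (i : V) : ℝ :=
  (∑ σ : V → Bool, spinVal (σ i) *
      Real.exp (β * ((∑ B : ℬ, J B * sigmaSet σ (B : Finset V)) + ∑ j, h j * spinVal (σ j)))) /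
  (∑ σ : V → Bool,
      Real.exp (β * ((∑ B : ℬ, J B * sigmaSet σ (B : Finset V)) + ∑ j, h j * spinVal (σ j))))

/-! Given the couplings and all fields except `h_i`, the Gibbs average is
`⟨σ_i⟩ = tanh (β h_i + c)` with a cavity field `c` that does not depend on `h_i`. So it suffices
that `E[tanh² (X + c)]`, for `X` Gaussian, is smallest when `X + c` is centred. For an even
function `g` such as `tanh²`, `F m = E[g (X + m)]` is even in `m`, and for `m ≥ 0` its derivative
`E[g' (X + m)]` is nonnegative: `g'` is odd and nonnegative on `[0, ∞)`, and a Gaussian density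
centred at `m ≥ 0` is larger at `x` than at `-x` for every `x ≥ 0`. -/

lemma measurable_of_forall_hasDerivAt {g g' : ℝ → ℝ} (hg : ∀ x, HasDerivAt g (g' x) x) :
    Measurable g' := by
  rw [show g' = deriv g from funext fun x => (hg x).deriv.symm]
  exact measurable_deriv g

lemma Function.Even.odd_of_hasDerivAt {g g' : ℝ → ℝ} (hg : ∀ x, HasDerivAt g (g' x) x)
    (hg_even : Function.Even g) : Function.Odd g' := by
  intro x
  have h := (hg (-x)).comp x (hasDerivAt_neg x)
  rw [show g ∘ Neg.neg = g from funext hg_even] at h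
  linarith [(hg x).unique h]

section GaussianShift

variable {v : NNReal}

lemma gaussianPDFReal_neg_le {m x : ℝ} (hm : 0 ≤ m) (hx : 0 ≤ x) :
    gaussianPDFReal m v (-x) ≤ gaussianPDFReal m v x := by
  unfold gaussianPDFReal
  refine mul_le_mul_of_nonneg_left (exp_le_exp.2 ?_) (by positivity)
  exact div_le_div_of_nonneg_right (neg_le_neg (by nlinarith)) (by positivity)

lemma integral_gaussianReal_nonneg_of_odd {f : ℝ → ℝ} (hf_meas : Measurable f) {C : ℝ}
    (hf_bdd : ∀ x, |f x| ≤ C) (hf_odd : Function.Odd f) (hf_nonneg : ∀ x, 0 ≤ x → 0 ≤ f x)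
    {m : ℝ} (hm : 0 ≤ m) : 0 ≤ ∫ x, f x ∂gaussianReal m v := by
  rcases eq_or_ne v 0 with rfl | hv
  · simpa [gaussianReal_zero_var] using hf_nonneg m hm
  rw [integral_gaussianReal_eq_integral_smul hv]
  set φ := gaussianPDFReal m v
  have hint : Integrable fun x => φ x • f x := by
    simpa only [smul_eq_mul, mul_comm] using (integrable_gaussianPDFReal m v).bdd_mul
      hf_meas.aestronglyMeasurable (ae_of_all _ fun x => (Real.norm_eq_abs _).trans_le (hf_bdd x))
  have hreflect : ∫ x, φ (-x) • f (-x) = ∫ x, φ x • f x :=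
    integral_neg_eq_self (fun x => φ x • f x) volume
  -- pairing `x` with `-x`: the density is larger on the side where `f` is nonnegative
  have hpair : ∀ x, 0 ≤ φ x • f x + φ (-x) • f (-x) := by
    intro x
    rw [smul_eq_mul, smul_eq_mul, hf_odd x]
    rcases le_total 0 x with hx | hx
    · nlinarith [gaussianPDFReal_neg_le (v := v) hm hx, hf_nonneg x hx]
    · have hφ := gaussianPDFReal_neg_le (v := v) hm (neg_nonneg.2 hx)
      have hf := hf_nonneg (-x) (neg_nonneg.2 hx)
      rw [neg_neg] at hφ
      rw [hf_odd x] at hf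
      nlinarith
  have := integral_nonneg (μ := volume) (f := fun x => φ x • f x + φ (-x) • f (-x)) hpair
  rw [integral_add hint hint.comp_neg, hreflect] at this
  linarith

lemma integral_gaussianReal_comp_add_const {E : Type*} [NormedAddCommGroup E] [NormedSpace ℝ E]
    (f : ℝ → E) (μ c : ℝ) :
    ∫ x, f (x + c) ∂gaussianReal μ v = ∫ x, f x ∂gaussianReal (μ + c) v := by
  rw [← gaussianReal_map_add_const, (measurableEmbedding_addRight c).integral_map]

lemma integral_gaussianReal_comp_neg {E : Type*} [NormedAddCommGroup E] [NormedSpace ℝ E]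
    (f : ℝ → E) (μ : ℝ) :
    ∫ x, f (-x) ∂gaussianReal μ v = ∫ x, f x ∂gaussianReal (-μ) v := by
  rw [← gaussianReal_map_neg, measurableEmbedding_neg.integral_map]

variable {g g' : ℝ → ℝ} {M C : ℝ}

lemma hasDerivAt_integral_gaussianReal_mean (hg : ∀ x, HasDerivAt g (g' x) x)
    (hg_bdd : ∀ x, |g x| ≤ M) (hg'_bdd : ∀ x, |g' x| ≤ C) (m : ℝ) :
    HasDerivAt (fun m => ∫ x, g x ∂gaussianReal m v) (∫ x, g' x ∂gaussianReal m v) m := by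
  have hg_meas : Measurable g :=
    (continuous_iff_continuousAt.2 fun x => (hg x).continuousAt).measurable
  have hg'_meas := measurable_of_forall_hasDerivAt hg
  have hshift (f : ℝ → ℝ) (m : ℝ) :
      ∫ x, f x ∂gaussianReal m v = ∫ x, f (x + m) ∂gaussianReal 0 v := by
    rw [integral_gaussianReal_comp_add_const, zero_add]
  simp_rw [hshift g, hshift g']
  refine (hasDerivAt_integral_of_dominated_loc_of_deriv_le (bound := fun _ => C) Filter.univ_mem
    (.of_forall fun a => (hg_meas.comp (measurable_add_const a)).aestronglyMeasurable)
    (.of_bound (hg_meas.comp (measurable_add_const m)).aestronglyMeasurable M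
      (ae_of_all _ fun x => (Real.norm_eq_abs _).trans_le (hg_bdd _)))
    (hg'_meas.comp (measurable_add_const m)).aestronglyMeasurable
    (ae_of_all _ fun x a _ => (Real.norm_eq_abs _).trans_le (hg'_bdd _))
    (integrable_const C)
    (ae_of_all _ fun x a _ => (hg (x + a)).comp_const_add x a)).2

theorem integral_gaussianReal_zero_le_of_even (hg : ∀ x, HasDerivAt g (g' x) x)
    (hg_even : Function.Even g) (hg'_nonneg : ∀ x, 0 ≤ x → 0 ≤ g' x)
    (hg_bdd : ∀ x, |g x| ≤ M) (hg'_bdd : ∀ x, |g' x| ≤ C) (m : ℝ) :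
    ∫ x, g x ∂gaussianReal 0 v ≤ ∫ x, g x ∂gaussianReal m v := by
  set F := fun m => ∫ x, g x ∂gaussianReal m v
  have hF := hasDerivAt_integral_gaussianReal_mean (v := v) hg hg_bdd hg'_bdd
  have hF_even : Function.Even F := fun m => by
    simp only [F, ← integral_gaussianReal_comp_neg, funext hg_even]
  have hmono : MonotoneOn F (Set.Ici 0) := by
    refine monotoneOn_of_deriv_nonneg (convex_Ici 0)
      (fun m _ => (hF m).continuousAt.continuousWithinAt)
      (fun m _ => (hF m).differentiableAt.differentiableWithinAt) fun m hm => ?_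
    rw [interior_Ici] at hm
    rw [(hF m).deriv]
    exact integral_gaussianReal_nonneg_of_odd (measurable_of_forall_hasDerivAt hg) hg'_bdd
      (hg_even.odd_of_hasDerivAt hg) hg'_nonneg hm.le
  change F 0 ≤ F m
  rcases le_total 0 m with hm | hm
  · exact hmono Set.self_mem_Ici hm hm
  · rw [← hF_even m]
    exact hmono Set.self_mem_Ici (neg_nonneg.2 hm) (neg_nonneg.2 hm)

end GaussianShift

lemma Real.hasDerivAt_tanh (x : ℝ) : HasDerivAt tanh (1 - tanh x ^ 2) x := by
  rw [show tanh = fun y => sinh y / cosh y from funext tanh_eq_sinh_div_cosh]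
  refine ((hasDerivAt_sinh x).div (hasDerivAt_cosh x) (cosh_pos x).ne').congr_deriv ?_
  have := cosh_pos x
  field_simp

lemma Real.continuous_tanh_s16 : Continuous tanh :=
  continuous_iff_continuousAt.2 fun x => (hasDerivAt_tanh x).continuousAt

lemma Real.tanh_nonneg {x : ℝ} (hx : 0 ≤ x) : 0 ≤ tanh x := by
  rw [tanh_eq_sinh_div_cosh]
  exact div_nonneg (sinh_nonneg_iff.2 hx) (cosh_pos x).le

lemma Real.hasDerivAt_tanh_sq (x : ℝ) :
    HasDerivAt (fun x => tanh x ^ 2) (2 * tanh x * (1 - tanh x ^ 2)) x := by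
  refine ((hasDerivAt_tanh x).fun_pow 2).congr_deriv ?_
  ring

theorem integral_tanh_sq_mul_le (β c m : ℝ) (v : NNReal) :
    ∫ x, tanh (β * x) ^ 2 ∂gaussianReal 0 v ≤ ∫ x, tanh (β * x + c) ^ 2 ∂gaussianReal m v := by
  have hscale (f : ℝ → ℝ) (hf : Continuous f) (m : ℝ) :
      ∫ x, f (β * x) ∂gaussianReal m v = ∫ x, f x ∂(gaussianReal m v).map (β * ·) :=
    (integral_map (by fun_prop) hf.aestronglyMeasurable).symm
  rw [hscale (fun x => tanh x ^ 2) (continuous_tanh_s16.pow 2), hscale (fun x => tanh (x + c) ^ 2)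
      ((continuous_tanh_s16.comp (continuous_add_const c)).pow 2), gaussianReal_map_const_mul,
    gaussianReal_map_const_mul,
    integral_gaussianReal_comp_add_const (fun x => tanh x ^ 2), mul_zero]
  refine integral_gaussianReal_zero_le_of_even (M := 1) (C := 2) hasDerivAt_tanh_sq
    (fun x => by simp only [tanh_neg, neg_sq]) (fun x hx => ?_) (fun x => ?_) (fun x => ?_) _
  · exact mul_nonneg (mul_nonneg zero_le_two (tanh_nonneg hx)) (sub_nonneg.2 (tanh_sq_lt_one x).le)
  · exact (abs_of_nonneg (sq_nonneg _)).trans_le (tanh_sq_lt_one x).le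
  · rw [abs_mul, abs_mul, abs_two, abs_of_nonneg (sub_nonneg.2 (tanh_sq_lt_one x).le)]
    nlinarith [abs_tanh_lt_one x, abs_nonneg (tanh x), sq_nonneg (tanh x)]

section ProductMeasure

variable {α γ : Type*} [MeasurableSpace α] [MeasurableSpace γ]

lemma le_integral_prod_of_forall_le_integral {μ : Measure α} {ν : Measure γ}
    [IsProbabilityMeasure μ] [SFinite ν] {f : α × γ → ℝ} (hf : Integrable f (μ.prod ν))
    {c : ℝ} (hc : ∀ x, c ≤ ∫ y, f (x, y) ∂ν) : c ≤ ∫ z, f z ∂μ.prod ν := by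
  rw [integral_prod f hf]
  calc c = ∫ _, c ∂μ := by simp
    _ ≤ _ := integral_mono (integrable_const c) hf.integral_prod_left hc

variable {ι : Type*} [Fintype ι] [DecidableEq ι] {X : ι → Type*} [∀ i, MeasurableSpace (X i)]
  (μ : ∀ i, Measure (X i)) [∀ i, IsProbabilityMeasure (μ i)]

lemma measurePreserving_update_pi (i : ι) :
    MeasurePreserving (fun p : (∀ j, X j) × X i => Function.update p.1 i p.2)
      ((Measure.pi μ).prod (μ i)) (Measure.pi μ) where
  measurable := measurable_update'
  map_eq := by
    refine (Measure.pi_eq fun s hs => ?_).symm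
    have hpre : (fun p : (∀ j, X j) × X i => Function.update p.1 i p.2) ⁻¹' Set.univ.pi s
        = Set.univ.pi (Function.update s i Set.univ) ×ˢ s i := by
      ext ⟨x, t⟩
      simp only [Set.mem_preimage, Set.mem_univ_pi, Set.mem_prod]
      constructor
      · intro h
        refine ⟨fun j => ?_, by simpa using h i⟩
        by_cases hj : j = i
        · subst hj; simp
        · simpa [Function.update_of_ne hj] using h j
      · rintro ⟨h, ht⟩ j
        by_cases hj : j = i
        · subst hj; simpa using ht
        · simpa [Function.update_of_ne hj] using h j
    rw [Measure.map_apply measurable_update' (MeasurableSet.univ_pi hs), hpre, Measure.prod_prod,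
      Measure.pi_pi, ← Finset.mul_prod_erase _ _ (Finset.mem_univ i),
      ← Finset.mul_prod_erase _ (fun j => μ j (s j)) (Finset.mem_univ i),
      Function.update_self, measure_univ, one_mul, mul_comm]
    congr 1
    exact Finset.prod_congr rfl fun j hj => by
      rw [Function.update_of_ne (Finset.ne_of_mem_erase hj)]

lemma le_integral_pi_of_forall_le_integral_update {f : (∀ j, X j) → ℝ}
    (hf : Integrable f (Measure.pi μ)) {c : ℝ} (i : ι)
    (hc : ∀ x, c ≤ ∫ t, f (Function.update x i t) ∂μ i) : c ≤ ∫ x, f x ∂Measure.pi μ := by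
  have hΦ := measurePreserving_update_pi μ i
  rw [← hΦ.map_eq] at hf ⊢
  rw [integral_map hΦ.measurable.aemeasurable hf.aestronglyMeasurable]
  exact le_integral_prod_of_forall_le_integral (hf.comp_measurable hΦ.measurable) hc

end ProductMeasure

section GibbsAverage

lemma tanh_add_half_log_div {A B : ℝ} (hA : 0 < A) (hB : 0 < B) (x : ℝ) :
    tanh (x + log (A / B) / 2) = (exp x * A - exp (-x) * B) / (exp x * A + exp (-x) * B) := by
  have hA' : A = exp (log (A / B) / 2) ^ 2 * B := by
    rw [sq, ← exp_add, add_halves, exp_log (div_pos hA hB), div_mul_cancel₀ _ hB.ne']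
  generalize log (A / B) / 2 = c at hA' ⊢
  subst hA'
  rw [tanh_eq, neg_add, exp_add, exp_add, exp_neg c]
  field_simp

lemma sum_mul_eq_fiberwise {Ω : Type*} [Fintype Ω] (s : Ω → Bool) (w : Ω → ℝ) (F : Bool → ℝ) :
    ∑ ω, F (s ω) * w ω
      = F true * ∑ ω with s ω = true, w ω + F false * ∑ ω with s ω = false, w ω := by
  rw [← Finset.sum_fiberwise Finset.univ s, Fintype.sum_bool, Finset.mul_sum, Finset.mul_sum]
  congr 1 <;> exact Finset.sum_congr rfl fun ω hω => by rw [(Finset.mem_filter.1 hω).2]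

theorem exists_forall_spin_average_eq_tanh {Ω : Type*} [Fintype Ω] (s : Ω → Bool)
    (hs : Function.Surjective s) (w : Ω → ℝ) (hw : ∀ ω, 0 < w ω) :
    ∃ c, ∀ x, (∑ ω, spinVal (s ω) * exp (x * spinVal (s ω)) * w ω)
      / (∑ ω, exp (x * spinVal (s ω)) * w ω) = tanh (x + c) := by
  have hpos (b : Bool) : 0 < ∑ ω with s ω = b, w ω := by
    obtain ⟨ω, hω⟩ := hs b
    exact Finset.sum_pos (fun ω _ => hw ω) ⟨ω, Finset.mem_filter.2 ⟨Finset.mem_univ ω, hω⟩⟩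
  refine ⟨log ((∑ ω with s ω = true, w ω) / ∑ ω with s ω = false, w ω) / 2, fun x => ?_⟩
  rw [tanh_add_half_log_div (hpos true) (hpos false),
    sum_mul_eq_fiberwise s w fun b => spinVal b * exp (x * spinVal b),
    sum_mul_eq_fiberwise s w fun b => exp (x * spinVal b)]
  simp only [spinVal, if_true, Bool.false_eq_true, if_false, mul_one, mul_neg, one_mul, neg_one_mul]
  ring

variable {V : Type} [Fintype V] [DecidableEq V]

noncomputable def cavityWeight (β : ℝ) (ℬ : Finset (Finset V)) (J : ℬ → ℝ) (h : V → ℝ) (i : V)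
    (σ : V → Bool) : ℝ :=
  exp (β * ((∑ B : ℬ, J B * sigmaSet σ B) + ∑ j ∈ Finset.univ.erase i, h j * spinVal (σ j)))

lemma exp_energy_update_eq_mul_cavityWeight (β : ℝ) (ℬ : Finset (Finset V)) (J : ℬ → ℝ)
    (h : V → ℝ) (i : V) (t : ℝ) (σ : V → Bool) :
    exp (β * ((∑ B : ℬ, J B * sigmaSet σ B) + ∑ j, Function.update h i t j * spinVal (σ j)))
      = exp (β * t * spinVal (σ i)) * cavityWeight β ℬ J h i σ := by
  have hrest : ∑ j ∈ Finset.univ.erase i, Function.update h i t j * spinVal (σ j)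
      = ∑ j ∈ Finset.univ.erase i, h j * spinVal (σ j) :=
    Finset.sum_congr rfl fun j hj => by rw [Function.update_of_ne (Finset.ne_of_mem_erase hj)]
  rw [cavityWeight, ← Finset.add_sum_erase _ (fun j => Function.update h i t j * spinVal (σ j))
    (Finset.mem_univ i), hrest, Function.update_self, ← exp_add]
  ring_nf

theorem exists_forall_rfGibbs_update_eq_tanh (β : ℝ) (ℬ : Finset (Finset V)) (J : ℬ → ℝ)
    (h : V → ℝ) (i : V) : ∃ c, ∀ t, rfGibbs β ℬ J (Function.update h i t) i = tanh (β * t + c) := by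
  obtain ⟨c, hc⟩ := exists_forall_spin_average_eq_tanh (fun σ : V → Bool => σ i)
    (fun b => ⟨fun _ => b, rfl⟩) (cavityWeight β ℬ J h i) fun _ => exp_pos _
  refine ⟨c, fun t => ?_⟩
  rw [← hc, rfGibbs]
  simp only [exp_energy_update_eq_mul_cavityWeight, mul_assoc]

lemma rfGibbs_sq_le_one (β : ℝ) (ℬ : Finset (Finset V)) (J : ℬ → ℝ) (h : V → ℝ) (i : V) :
    rfGibbs β ℬ J h i ^ 2 ≤ 1 := by
  obtain ⟨c, hc⟩ := exists_forall_rfGibbs_update_eq_tanh β ℬ J h i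
  rw [← Function.update_eq_self i h, hc]
  exact (tanh_sq_lt_one _).le

lemma measurable_rfGibbs (β : ℝ) (ℬ : Finset (Finset V)) (i : V) :
    Measurable fun p : (ℬ → ℝ) × (V → ℝ) => rfGibbs β ℬ p.1 p.2 i := by
  unfold rfGibbs
  fun_prop

theorem integral_tanh_sq_le_integral_rfGibbs_sq (β : ℝ) (ℬ : Finset (Finset V)) (J : ℬ → ℝ)
    (i : V) (J0 : ℝ) (v : NNReal) :
    ∫ x, tanh (β * x) ^ 2 ∂gaussianReal 0 v
      ≤ ∫ h, rfGibbs β ℬ J h i ^ 2 ∂Measure.pi fun _ : V => gaussianReal J0 v := by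
  have hmeas : Measurable fun h => rfGibbs β ℬ J h i ^ 2 :=
    ((measurable_rfGibbs β ℬ i).comp measurable_prodMk_left).pow_const 2
  refine le_integral_pi_of_forall_le_integral_update _
    (.of_bound hmeas.aestronglyMeasurable 1 (ae_of_all _ fun h => ?_)) i fun h => ?_
  · exact (abs_of_nonneg (sq_nonneg _)).trans_le (rfGibbs_sq_le_one β ℬ J h i)
  · obtain ⟨c, hc⟩ := exists_forall_rfGibbs_update_eq_tanh β ℬ J h i
    simp only [hc]
    exact integral_tanh_sq_mul_le β c J0 v

end GibbsAverage

theorem random_field_spin_glass_order_parameter_lower_bound_general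
    {V : Type} [Fintype V] [DecidableEq V] [Nonempty V]
    (ℬ : Finset (Finset V))
    (β : ℝ)
    (ν : Measure (ℬ → ℝ)) [IsProbabilityMeasure ν]
    (J0 : ℝ) (Λ : NNReal)
    (q : ℝ)
    (hq : q = (Fintype.card V : ℝ)⁻¹ * ∑ i : V,
      ∫ p, rfGibbs β ℬ p.1 p.2 i ^ 2
        ∂(ν.prod (Measure.pi fun _ : V => gaussianReal J0 (Λ ^ 2)))) :
    ∫ x, Real.tanh (β * x) ^ 2 ∂(gaussianReal 0 (Λ ^ 2)) ≤ q := by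
  have hsite (i : V) : ∫ x, tanh (β * x) ^ 2 ∂gaussianReal 0 (Λ ^ 2)
      ≤ ∫ p, rfGibbs β ℬ p.1 p.2 i ^ 2
        ∂(ν.prod (Measure.pi fun _ : V => gaussianReal J0 (Λ ^ 2))) :=
    le_integral_prod_of_forall_le_integral
      (.of_bound ((measurable_rfGibbs β ℬ i).pow_const 2).aestronglyMeasurable 1
        (ae_of_all _ fun p => (abs_of_nonneg (sq_nonneg _)).trans_le
          (rfGibbs_sq_le_one β ℬ p.1 p.2 i)))
      fun J => integral_tanh_sq_le_integral_rfGibbs_sq β ℬ J i J0 (Λ ^ 2)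
  have hcard : (0 : ℝ) < Fintype.card V := by exact_mod_cast Fintype.card_pos
  rw [hq, le_inv_mul_iff₀ hcard]
  simpa using Finset.card_nsmul_le_sum Finset.univ _ _ fun i _ => hsite i

/-- **Lower bound on the spin-glass order parameter.** In the random-field Ising model with
arbitrary (deterministic or random) interactions `J_B` on sets of size at least two and
independent i.i.d. Gaussian fields `h_i ~ N(J_0, Λ²)`, the spin-glass order parameter
`q = (1/|V|) ∑_i E[⟨σ_i⟩²]` satisfies `E[tanh²(βh)]_{N(0, Λ²)} ≤ q`. -/
theorem random_field_spin_glass_order_parameter_lower_bound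
    {V : Type} [Fintype V] [DecidableEq V] [Nonempty V]
    (ℬ : Finset (Finset V)) (hℬ : ∀ B ∈ ℬ, 2 ≤ B.card)
    (β : ℝ) (hβ : 0 < β)
    (ν : Measure (ℬ → ℝ)) [IsProbabilityMeasure ν]
    (J0 : ℝ) (Λ : NNReal) (hΛ : 0 < Λ)
    (q : ℝ)
    (hq : q = (Fintype.card V : ℝ)⁻¹ * ∑ i : V,
      ∫ p, rfGibbs β ℬ p.1 p.2 i ^ 2
        ∂(ν.prod (Measure.pi fun _ : V => gaussianReal J0 (Λ ^ 2)))) :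
    ∫ x, Real.tanh (β * x) ^ 2 ∂(gaussianReal 0 (Λ ^ 2)) ≤ q :=
  random_field_spin_glass_order_parameter_lower_bound_general ℬ β ν J0 Λ q hq
end
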